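/- A bounded weighted shift S_λ on a directed tree T is quasinormal if and only if ‖S_λ e_u‖ = ‖S_λ e_v‖ whenever v is a child of u with λ_v ≠ 0. Moreover, if V° is nonempty and all weights are nonzero, then S_λ is quasinormal if and only if ‖S_λ‖^{-1} S_λ is an isometry. -/

import Mathlib

/-- A directed tree: a nonempty, connected, circuit-free directed graph in which
every vertex with an incoming edge has a unique parent. -/
structure DirectedTree (V : Type) where
  E : V → V → Prop
  nonempty : Nonempty V
  irrefl : ∀ v : V, ¬ E v v
  connected : ∀ u v : V, Relation.ReflTransGen (fun a b => E a b ∨ E b a) u v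
  noCircuit : ∀ v : V, ¬ Relation.TransGen E v v
  parentUnique : ∀ v : V, (∃ u, E u v) → ∃! u, E u v

/-- The set of children of a vertex. -/
def DirectedTree.chi {V : Type} (T : DirectedTree V) (u : V) : Set V := {v | T.E u v}

/-- The children of a set of vertices. -/
def DirectedTree.chiSet {V : Type} (T : DirectedTree V) (W : Set V) : Set V :=
  {v | ∃ u ∈ W, T.E u v}

/-- `chiIter n u` is `Chi^n({u})`, the vertices reachable from `u` by exactly `n` edges. -/
def DirectedTree.chiIter {V : Type} (T : DirectedTree V) (n : ℕ) (u : V) : Set V :=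
  (T.chiSet)^[n] {u}

/-- The descendants of a vertex. -/
def DirectedTree.des {V : Type} (T : DirectedTree V) (u : V) : Set V :=
  ⋃ n : ℕ, T.chiIter n u

/-- A root is a vertex with no incoming edge. -/
def DirectedTree.isRoot {V : Type} (T : DirectedTree V) (v : V) : Prop := ∀ u, ¬ T.E u v
open scoped ENNReal NNReal

open Classical in
/-- The formal weighted shift transform: `(Λ_T f)(v) = λ_v · f(par v)` for a vertex `v` with
a parent, and `(Λ_T f)(v) = 0` if `v` is a root. -/
noncomputable def lambdaT {V : Type} (T : DirectedTree V) (lam : V → ℂ) (f : V → ℂ) :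
    V → ℂ :=
  fun v => if h : ∃ u, T.E u v then lam v * f h.choose else 0

/-- `Σ_{v ∈ Chi(u)} |λ_v|²`, computed in `ℝ≥0∞`. -/
noncomputable def childSum {V : Type} (T : DirectedTree V) (lam : V → ℂ) (u : V) : ℝ≥0∞ :=
  ∑' v : {v : V // T.E u v}, (‖lam (v : V)‖₊ : ℝ≥0∞) ^ 2

section Aux
set_option linter.unusedSectionVars false

variable {V : Type} [DecidableEq V] (T : DirectedTree V) (lam : V → ℂ)

lemma DT.choose_eq {u v : V} (h : T.E u v) (h' : ∃ p, T.E p v) : h'.choose = u := by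
  obtain ⟨w, _, hw⟩ := T.parentUnique v ⟨u, h⟩
  rw [hw _ h'.choose_spec, hw _ h]

variable (S : lp (fun _ : V => ℂ) 2 →L[ℂ] lp (fun _ : V => ℂ) 2)
  (hS : ∀ (f : lp (fun _ : V => ℂ) 2) (v : V), S f v = lambdaT T lam ⇑f v)

include hS in
open Classical in
lemma DT.S_single (u w : V) :
    S (lp.single 2 u (1 : ℂ)) w = if T.E u w then lam w else 0 := by
  rw [hS]
  unfold lambdaT
  by_cases hw : ∃ p, T.E p w
  · rw [dif_pos hw]
    by_cases he : T.E u w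
    · rw [if_pos he, DT.choose_eq T he hw, lp.single_apply_self, mul_one]
    · rw [if_neg he, lp.single_apply_ne, mul_zero]
      intro hc
      exact he (hc ▸ hw.choose_spec)
  · rw [dif_neg hw, if_neg fun he => hw ⟨u, he⟩]

lemma DT.norm_sq (g : lp (fun _ : V => ℂ) 2) : ‖g‖ ^ 2 = ∑' w, ‖g w‖ ^ 2 := by
  have h := lp.norm_rpow_eq_tsum (p := 2) (by norm_num) g
  simp only [ENNReal.toReal_ofNat] at h
  calc ‖g‖ ^ 2 = ‖g‖ ^ (2 : ℝ) := by rw [← Real.rpow_natCast]; norm_num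
  _ = ∑' w, ‖g w‖ ^ (2 : ℝ) := h
  _ = ∑' w, ‖g w‖ ^ 2 := by
      refine tsum_congr fun w => ?_
      rw [← Real.rpow_natCast]; norm_num

lemma DT.summable_sq (g : lp (fun _ : V => ℂ) 2) : Summable fun w => ‖g w‖ ^ 2 := by
  have := (lp.memℓp g).summable (p := 2) (by norm_num)
  simp only [ENNReal.toReal_ofNat] at this
  convert this using 2 with w
  rw [← Real.rpow_natCast]; norm_num


local notation "⟪" x ", " y "⟫" => @inner ℂ _ _ x y

include hS in
open Classical in
lemma DT.diag (g : lp (fun _ : V => ℂ) 2) (v : V) :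
    ((ContinuousLinearMap.adjoint S) (S g)) v
      = ((‖S (lp.single 2 v (1:ℂ))‖ ^ 2 : ℝ) : ℂ) * g v := by
  have h1 : ((ContinuousLinearMap.adjoint S) (S g)) v
      = ⟪lp.single 2 v (1:ℂ), (ContinuousLinearMap.adjoint S) (S g)⟫ := by
    rw [lp.inner_single_left]; simp [RCLike.inner_apply]
  rw [h1, ContinuousLinearMap.adjoint_inner_right, lp.inner_eq_tsum]
  have hterm : ∀ w, ⟪(S (lp.single 2 v (1:ℂ))) w, (S g) w⟫
      = ((if T.E v w then ‖lam w‖^2 else 0 : ℝ) : ℂ) * g v := by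
    intro w
    rw [DT.S_single T lam S hS, hS, RCLike.inner_apply]
    unfold lambdaT
    by_cases he : T.E v w
    · rw [if_pos he, dif_pos ⟨v, he⟩, DT.choose_eq T he, if_pos he,
        mul_right_comm, Complex.mul_conj']
      push_cast
      ring
    · rw [if_neg he, if_neg he, map_zero, mul_zero]
      simp
  rw [tsum_congr hterm, tsum_mul_right, ← Complex.ofReal_tsum]
  congr 2
  rw [DT.norm_sq]
  refine tsum_congr fun w => ?_
  rw [DT.S_single T lam S hS]
  by_cases he : T.E v w
  · rw [if_pos he, if_pos he]
  · rw [if_neg he, if_neg he, norm_zero]; ring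

include hS in
open Classical in
lemma DT.part1 :
    S.comp ((ContinuousLinearMap.adjoint S).comp S) =
        ((ContinuousLinearMap.adjoint S).comp S).comp S ↔
      ∀ u v : V, T.E u v → lam v ≠ 0 →
        ‖S (lp.single 2 u (1 : ℂ))‖ = ‖S (lp.single 2 v (1 : ℂ))‖ := by
  constructor
  · intro hQ u v huv hv
    have h := congrArg (fun A : lp (fun _ : V => ℂ) 2 →L[ℂ] lp (fun _ : V => ℂ) 2 =>
      (A (lp.single 2 u (1:ℂ)) : V → ℂ) v) hQ
    simp only [ContinuousLinearMap.comp_apply] at h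
    rw [hS, DT.diag T lam S hS] at h
    unfold lambdaT at h
    rw [dif_pos ⟨u, huv⟩, DT.choose_eq T huv, DT.diag T lam S hS, lp.single_apply_self, mul_one,
      DT.S_single T lam S hS, if_pos huv] at h
    have h2 : ((‖S (lp.single 2 u (1:ℂ))‖^2 : ℝ) : ℂ)
        = ((‖S (lp.single 2 v (1:ℂ))‖^2 : ℝ) : ℂ) :=
      mul_left_cancel₀ hv (h.trans (mul_comm _ _))
    rw [Complex.ofReal_inj] at h2
    calc ‖S (lp.single 2 u (1:ℂ))‖ = √(‖S (lp.single 2 u (1:ℂ))‖^2) :=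
          (Real.sqrt_sq (norm_nonneg _)).symm
    _ = √(‖S (lp.single 2 v (1:ℂ))‖^2) := by rw [h2]
    _ = ‖S (lp.single 2 v (1:ℂ))‖ := Real.sqrt_sq (norm_nonneg _)
  · intro hc
    ext f v
    simp only [ContinuousLinearMap.comp_apply]
    rw [hS, DT.diag T lam S hS, hS]
    unfold lambdaT
    by_cases hv : ∃ p, T.E p v
    · rw [dif_pos hv, dif_pos hv, DT.diag T lam S hS]
      by_cases hl : lam v = 0
      · rw [hl]; ring
      · have h3 := hc hv.choose v hv.choose_spec hl
        rw [h3]; ring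
    · rw [dif_neg hv, dif_neg hv, mul_zero]

lemma DT.ofReal_norm_sq (g : lp (fun _ : V => ℂ) 2) :
    ENNReal.ofReal (‖g‖ ^ 2) = ∑' w, ENNReal.ofReal (‖g w‖ ^ 2) := by
  rw [DT.norm_sq, ENNReal.ofReal_tsum_of_nonneg (fun w => sq_nonneg _) (DT.summable_sq g)]

include hS in
open Classical in
lemma DT.key (N : ℝ) (hNc : ∀ u : V, ‖S (lp.single 2 u (1 : ℂ))‖ = N)
    (f : lp (fun _ : V => ℂ) 2) : ‖S f‖ = N * ‖f‖ := by
  obtain ⟨u₀⟩ := T.nonempty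
  have hN0 : 0 ≤ N := hNc u₀ ▸ norm_nonneg _
  set F : V → V → ℝ≥0∞ := fun u w =>
    if T.E u w then ENNReal.ofReal (‖lam w‖ ^ 2 * ‖f u‖ ^ 2) else 0 with hF
  have stepA : ∀ w, ENNReal.ofReal (‖(S f : V → ℂ) w‖ ^ 2) = ∑' u, F u w := by
    intro w
    rw [hS]
    unfold lambdaT
    by_cases hw : ∃ p, T.E p w
    · rw [dif_pos hw]
      rw [tsum_eq_single hw.choose (fun u hu => by
        simp only [hF]
        rw [if_neg fun he => hu (DT.choose_eq T he hw ▸ rfl)])]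
      simp only [hF]
      rw [if_pos hw.choose_spec, norm_mul, mul_pow]
    · rw [dif_neg hw]
      have : ∀ u, F u w = 0 := fun u => by
        simp only [hF]; rw [if_neg fun he => hw ⟨u, he⟩]
      rw [tsum_congr this]
      simp
  have stepB : ∀ u, ∑' w, F u w = ENNReal.ofReal (N ^ 2) * ENNReal.ofReal (‖f u‖ ^ 2) := by
    intro u
    have h1 : ∀ w, F u w = (if T.E u w then ENNReal.ofReal (‖lam w‖ ^ 2) else 0)
        * ENNReal.ofReal (‖f u‖ ^ 2) := by
      intro w
      simp only [hF]
      by_cases he : T.E u w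
      · rw [if_pos he, if_pos he, ENNReal.ofReal_mul (sq_nonneg _)]
      · rw [if_neg he, if_neg he, zero_mul]
    rw [tsum_congr h1, ENNReal.tsum_mul_right]
    congr 1
    rw [← hNc u, DT.ofReal_norm_sq]
    refine tsum_congr fun w => ?_
    rw [DT.S_single T lam S hS]
    by_cases he : T.E u w
    · rw [if_pos he, if_pos he]
    · rw [if_neg he, if_neg he, norm_zero]
      simp
  have main : ENNReal.ofReal (‖S f‖ ^ 2) = ENNReal.ofReal ((N * ‖f‖) ^ 2) := by
    rw [DT.ofReal_norm_sq, tsum_congr stepA, ENNReal.tsum_comm, tsum_congr stepB,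
      ENNReal.tsum_mul_left, ← DT.ofReal_norm_sq, ← ENNReal.ofReal_mul (sq_nonneg _)]
    congr 1
    ring
  rw [ENNReal.ofReal_eq_ofReal_iff (sq_nonneg _) (sq_nonneg _)] at main
  calc ‖S f‖ = √(‖S f‖ ^ 2) := (Real.sqrt_sq (norm_nonneg _)).symm
  _ = √((N * ‖f‖) ^ 2) := by rw [main]
  _ = N * ‖f‖ := Real.sqrt_sq (mul_nonneg hN0 (norm_nonneg _))

end Aux

/-- A bounded weighted shift `S_λ` on a directed tree is quasinormal (`S(S*S) = (S*S)S`) iff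
`‖S_λ e_u‖ = ‖S_λ e_v‖` whenever `v` is a child of `u` with `λ_v ≠ 0`. Moreover, if `V°` is
nonempty (there is an edge) and all weights are nonzero, then `S_λ` is quasinormal iff
`‖S_λ‖⁻¹ S_λ` is an isometry. -/
theorem stmt_19 {V : Type} [DecidableEq V] (T : DirectedTree V) (lam : V → ℂ)
    (S : lp (fun _ : V => ℂ) 2 →L[ℂ] lp (fun _ : V => ℂ) 2)
    (hS : ∀ (f : lp (fun _ : V => ℂ) 2) (v : V), S f v = lambdaT T lam ⇑f v) :
    (S.comp ((ContinuousLinearMap.adjoint S).comp S) =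
        ((ContinuousLinearMap.adjoint S).comp S).comp S ↔
      ∀ u v : V, T.E u v → lam v ≠ 0 →
        ‖S (lp.single 2 u (1 : ℂ))‖ = ‖S (lp.single 2 v (1 : ℂ))‖) ∧
    ((∃ u v : V, T.E u v) → (∀ u v : V, T.E u v → lam v ≠ 0) →
      (S.comp ((ContinuousLinearMap.adjoint S).comp S) =
          ((ContinuousLinearMap.adjoint S).comp S).comp S ↔
        ∀ f : lp (fun _ : V => ℂ) 2, ‖(((‖S‖⁻¹ : ℝ) : ℂ) • S) f‖ = ‖f‖)) := by
  refine ⟨DT.part1 T lam S hS, ?_⟩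
  rintro ⟨u₀, v₀, huv₀⟩ hlam
  have hone : ∀ u : V, ‖(lp.single 2 u (1 : ℂ) : lp (fun _ : V => ℂ) 2)‖ = 1 := by
    intro u
    have := lp.norm_single (α := V) (E := fun _ => ℂ) (p := 2) (by norm_num) u (1 : ℂ)
    simpa using this
  have hSe0 : S (lp.single 2 u₀ (1 : ℂ)) ≠ 0 := by
    intro h0
    apply hlam u₀ v₀ huv₀
    have := DT.S_single T lam S hS u₀ v₀
    rw [h0, if_pos huv₀] at this
    simpa using this.symm
  have hpos : 0 < ‖S (lp.single 2 u₀ (1 : ℂ))‖ := norm_pos_iff.mpr hSe0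
  rw [DT.part1 T lam S hS]
  constructor
  · intro hc f
    have hc' : ∀ u v : V, T.E u v →
        ‖S (lp.single 2 u (1 : ℂ))‖ = ‖S (lp.single 2 v (1 : ℂ))‖ :=
      fun u v h => hc u v h (hlam u v h)
    set N := ‖S (lp.single 2 u₀ (1 : ℂ))‖ with hN
    have hNc : ∀ u : V, ‖S (lp.single 2 u (1 : ℂ))‖ = N := by
      intro w
      induction T.connected u₀ w with
      | refl => rfl
      | tail _ h ih =>
        rcases h with h | h
        · rw [← hc' _ _ h]; exact ih
        · rw [hc' _ _ h]; exact ih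
    have key := DT.key T lam S hS N hNc
    have hSnorm : ‖S‖ = N := by
      refine le_antisymm (S.opNorm_le_bound hpos.le fun g => (key g).le) ?_
      have := S.le_opNorm (lp.single 2 u₀ (1 : ℂ))
      rw [hone u₀, mul_one] at this
      exact this
    rw [ContinuousLinearMap.smul_apply, norm_smul, key f, hSnorm]
    rw [Complex.norm_real, Real.norm_eq_abs, abs_of_nonneg (inv_nonneg.mpr hpos.le),
      ← mul_assoc, inv_mul_cancel₀ hpos.ne', one_mul]
  · intro hiso u v huv _
    have hSpos : 0 < ‖S‖ := by
      have := S.le_opNorm (lp.single 2 u₀ (1 : ℂ))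
      rw [hone u₀, mul_one] at this
      exact lt_of_lt_of_le hpos this
    have hnorm : ∀ g : lp (fun _ : V => ℂ) 2, ‖S g‖ = ‖S‖ * ‖g‖ := by
      intro g
      have h := hiso g
      rw [ContinuousLinearMap.smul_apply, norm_smul, Complex.norm_real, Real.norm_eq_abs,
        abs_of_nonneg (inv_nonneg.mpr hSpos.le)] at h
      rw [← h, ← mul_assoc, mul_inv_cancel₀ hSpos.ne', one_mul]
    rw [hnorm, hnorm, hone, hone]
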